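/- arXiv:0806.0090 — 4 statements merged into one kernel-verified Lean document; each statement's English description precedes it below -/
import Mathlib

section
/- Let c > 0 and t₀ ∈ ℝ. Let y₀ : ℝ → ℝ be twice differentiable with y₀''(t) = c² · y₀(t) for all t ≥ t₀, and y₀(t₀) > 0, y₀'(t₀) > 0. Let y : ℝ → ℝ be twice differentiable on [t₀, ∞) satisfying y''(t) ≥ c² · y(t) > 0 for all t ≥ t₀, y(t₀) = y₀(t₀), and y'(t₀) ≥ y₀'(t₀). Then y(t) ≥ y₀(t) for every t ≥ t₀. -/
/-!
Put `z = y - y₀`, so that `z'' ≥ c² z`, `z t₀ = 0` and `z' t₀ ≥ 0`. Factoring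
`D² - c² = (D - c)(D + c)`, the function `p = z' + c z` satisfies `p' ≥ c p`, and a first-order
inequality `f' ≥ k f` with `f a ≥ 0` forces `f ≥ 0` because `exp (-k t) * f t` is nondecreasing.
Applied to `p`, this gives `p ≥ 0`, i.e. `z' ≥ -c z`, and applied once more, `z ≥ 0`.
-/

open Set Real

section
variable {a : ℝ} {f f' : ℝ → ℝ}

theorem monotoneOn_Ici_of_hasDerivWithinAt_nonneg
    (hf : ∀ t ∈ Ici a, HasDerivWithinAt f (f' t) (Ici a) t) (hf' : ∀ t ∈ Ici a, 0 ≤ f' t) :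
    MonotoneOn f (Ici a) := by
  refine monotoneOn_of_hasDerivWithinAt_nonneg (f' := f') (convex_Ici a)
    (fun t ht => (hf t ht).continuousWithinAt) (fun t ht => ?_) (fun t ht => ?_)
  · rw [interior_Ici] at ht ⊢
    exact (hf t (Ioi_subset_Ici_self ht)).mono Ioi_subset_Ici_self
  · rw [interior_Ici] at ht
    exact hf' t (Ioi_subset_Ici_self ht)

theorem nonneg_of_hasDerivWithinAt_ge_mul_self {k : ℝ}
    (hf : ∀ t ∈ Ici a, HasDerivWithinAt f (f' t) (Ici a) t)
    (hk : ∀ t ∈ Ici a, k * f t ≤ f' t) (ha : 0 ≤ f a) :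
    ∀ t ∈ Ici a, 0 ≤ f t := by
  have hg : ∀ t ∈ Ici a, HasDerivWithinAt (fun s => exp (-(k * s)) * f s)
      (exp (-(k * t)) * (f' t - k * f t)) (Ici a) t := by
    intro t ht
    have hexp : HasDerivWithinAt (fun s => exp (-(k * s))) (exp (-(k * t)) * -k) (Ici a) t :=
      (((hasDerivWithinAt_id t _).const_mul k).neg.congr_deriv (by ring)).exp
    exact (hexp.mul (hf t ht)).congr_deriv (by ring)
  have hmono := monotoneOn_Ici_of_hasDerivWithinAt_nonneg hg
    fun t ht => mul_nonneg (exp_pos _).le (sub_nonneg.2 (hk t ht))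
  intro t ht
  have hgt : exp (-(k * a)) * f a ≤ exp (-(k * t)) * f t := hmono self_mem_Ici ht ht
  exact nonneg_of_mul_nonneg_right (le_trans (by positivity) hgt) (exp_pos _)

theorem nonneg_of_hasDerivWithinAt_two_ge_sq_mul_self {c : ℝ} {f'' : ℝ → ℝ}
    (hf : ∀ t ∈ Ici a, HasDerivWithinAt f (f' t) (Ici a) t)
    (hf' : ∀ t ∈ Ici a, HasDerivWithinAt f' (f'' t) (Ici a) t)
    (hc : ∀ t ∈ Ici a, c ^ 2 * f t ≤ f'' t) (ha : 0 ≤ f a) (ha' : 0 ≤ f' a + c * f a) :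
    ∀ t ∈ Ici a, 0 ≤ f t := by
  have hp : ∀ t ∈ Ici a, 0 ≤ f' t + c * f t :=
    nonneg_of_hasDerivWithinAt_ge_mul_self (k := c)
      (fun t ht => (hf' t ht).add ((hf t ht).const_mul c))
      (fun t ht => by linarith [hc t ht]) ha'
  exact nonneg_of_hasDerivWithinAt_ge_mul_self (k := -c) hf
    (fun t ht => by linarith [hp t ht]) ha

end

theorem stmt0_general (c t₀ : ℝ)
    (y₀ y₀' y₀'' y y' y'' : ℝ → ℝ)
    (hy₀1 : ∀ t ∈ Ici t₀, HasDerivWithinAt y₀ (y₀' t) (Ici t₀) t)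
    (hy₀2 : ∀ t ∈ Ici t₀, HasDerivWithinAt y₀' (y₀'' t) (Ici t₀) t)
    (hy₀eq : ∀ t ∈ Ici t₀, y₀'' t = c ^ 2 * y₀ t)
    (hy1 : ∀ t ∈ Ici t₀, HasDerivWithinAt y (y' t) (Ici t₀) t)
    (hy2 : ∀ t ∈ Ici t₀, HasDerivWithinAt y' (y'' t) (Ici t₀) t)
    (hineq : ∀ t ∈ Ici t₀, c ^ 2 * y t ≤ y'' t)
    (hinit : y t₀ = y₀ t₀)
    (hinit' : y₀' t₀ ≤ y' t₀) :
    ∀ t ∈ Ici t₀, y₀ t ≤ y t := by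
  have hz := nonneg_of_hasDerivWithinAt_two_ge_sq_mul_self (c := c) (f := fun t => y t - y₀ t)
    (fun t ht => (hy1 t ht).sub (hy₀1 t ht)) (fun t ht => (hy2 t ht).sub (hy₀2 t ht))
    (fun t ht => by rw [mul_sub, hy₀eq t ht]; linarith [hineq t ht])
    (by simp [hinit]) (by simpa [hinit])
  exact fun t ht => sub_nonneg.1 (hz t ht)

/-- Lemma 3.5: comparison principle for the differential inequality `y'' ≥ c² y > 0`. -/
theorem stmt0 (c t₀ : ℝ) (hc : 0 < c)
    (y₀ y₀' y₀'' y y' y'' : ℝ → ℝ)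
    (hy₀1 : ∀ t ∈ Ici t₀, HasDerivWithinAt y₀ (y₀' t) (Ici t₀) t)
    (hy₀2 : ∀ t ∈ Ici t₀, HasDerivWithinAt y₀' (y₀'' t) (Ici t₀) t)
    (hy₀eq : ∀ t ∈ Ici t₀, y₀'' t = c ^ 2 * y₀ t)
    (hy₀pos : 0 < y₀ t₀) (hy₀'pos : 0 < y₀' t₀)
    (hy1 : ∀ t ∈ Ici t₀, HasDerivWithinAt y (y' t) (Ici t₀) t)
    (hy2 : ∀ t ∈ Ici t₀, HasDerivWithinAt y' (y'' t) (Ici t₀) t)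
    (hineq : ∀ t ∈ Ici t₀, c ^ 2 * y t ≤ y'' t)
    (hypos : ∀ t ∈ Ici t₀, 0 < y t)
    (hinit : y t₀ = y₀ t₀)
    (hinit' : y₀' t₀ ≤ y' t₀) :
    ∀ t ∈ Ici t₀, y₀ t ≤ y t :=
  stmt0_general c t₀ y₀ y₀' y₀'' y y' y'' hy₀1 hy₀2 hy₀eq hy1 hy2 hineq hinit hinit'
end

section
/- Let c > 0, t₀ ∈ ℝ, and a, b > 0. Let y : ℝ → ℝ be twice differentiable on [t₀, ∞) satisfying y''(t) ≥ c² · y(t) > 0 for all t ≥ t₀, with y(t₀) = a and y'(t₀) ≥ b. Then for every t ≥ t₀ one has y(t) ≥ a · cosh(c(t − t₀)) + (b / c) · sinh(c(t − t₀)). -/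
open Set Real

/-!
With `Y` the comparison solution, `z = y - Y` satisfies `z'' ≥ c² z`, `z t₀ = 0`, `z' t₀ ≥ 0`.
Factor `d²/dt² - c² = (d/dt - c)(d/dt + c)`: the function `w = z' + c z` satisfies `w' ≥ c w` and
`w t₀ ≥ 0`, and then `z' ≥ -c z` with `z t₀ ≥ 0`. Each first-order inequality `u' ≥ k u` keeps
`u` nonnegative, because `exp (-k t) * u t` is nondecreasing.
-/

theorem nonneg_of_mul_le_derivWithin_Ici {u u' : ℝ → ℝ} {k t₀ : ℝ}
    (hu : ∀ t ∈ Ici t₀, HasDerivWithinAt u (u' t) (Ici t₀) t)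
    (hle : ∀ t ∈ Ici t₀, k * u t ≤ u' t) (h₀ : 0 ≤ u t₀) :
    ∀ t ∈ Ici t₀, 0 ≤ u t := by
  set g : ℝ → ℝ := fun t => exp (-k * t) * u t
  have hg : ∀ t ∈ Ici t₀,
      HasDerivWithinAt g (exp (-k * t) * (u' t - k * u t)) (Ici t₀) t := by
    intro t ht
    have hexp : HasDerivAt (fun s => exp (-k * s)) (exp (-k * t) * -k) t := by
      simpa using ((hasDerivAt_id t).const_mul (-k)).exp
    exact (hexp.hasDerivWithinAt.mul (hu t ht)).congr_deriv (by ring)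
  have hmono : MonotoneOn g (Ici t₀) := by
    refine monotoneOn_of_hasDerivWithinAt_nonneg (convex_Ici t₀)
      (f' := fun t => exp (-k * t) * (u' t - k * u t))
      (fun t ht => (hg t ht).continuousWithinAt) (fun t ht => ?_) (fun t ht => ?_)
    · rw [interior_Ici] at ht ⊢
      exact (hg t (Ioi_subset_Ici_self ht)).mono Ioi_subset_Ici_self
    · rw [interior_Ici] at ht
      exact mul_nonneg (exp_pos _).le (sub_nonneg.2 (hle t (Ioi_subset_Ici_self ht)))
  intro t ht
  have hgt : 0 ≤ g t := (mul_nonneg (exp_pos _).le h₀).trans (hmono self_mem_Ici ht ht)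
  exact (mul_nonneg_iff_of_pos_left (exp_pos _)).1 hgt

theorem nonneg_of_sq_mul_le_deriv2_Ici {z z' z'' : ℝ → ℝ} {c t₀ : ℝ}
    (hz : ∀ t ∈ Ici t₀, HasDerivWithinAt z (z' t) (Ici t₀) t)
    (hz' : ∀ t ∈ Ici t₀, HasDerivWithinAt z' (z'' t) (Ici t₀) t)
    (hle : ∀ t ∈ Ici t₀, c ^ 2 * z t ≤ z'' t) (h₀ : 0 ≤ z t₀) (h₀' : 0 ≤ z' t₀ + c * z t₀) :
    ∀ t ∈ Ici t₀, 0 ≤ z t := by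
  have hw : ∀ t ∈ Ici t₀, 0 ≤ z' t + c * z t :=
    nonneg_of_mul_le_derivWithin_Ici (k := c)
      (fun t ht => (hz' t ht).add ((hz t ht).const_mul c))
      (fun t ht => by nlinarith [hle t ht]) h₀'
  exact nonneg_of_mul_le_derivWithin_Ici (k := -c) hz (fun t ht => by linarith [hw t ht]) h₀

/-- The solution of `Y'' = c² Y` with `Y t₀ = a`, `Y' t₀ = b` (for `c ≠ 0`). -/
noncomputable def coshSinhSol (c t₀ a b t : ℝ) : ℝ :=
  a * cosh (c * (t - t₀)) + b / c * sinh (c * (t - t₀))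

theorem coshSinhSol_self (c t₀ a b : ℝ) : coshSinhSol c t₀ a b t₀ = a := by
  simp [coshSinhSol]

theorem coshSinhSol_sq_mul (c t₀ a b t : ℝ) :
    coshSinhSol c t₀ (c ^ 2 * a) (c ^ 2 * b) t = c ^ 2 * coshSinhSol c t₀ a b t := by
  simp only [coshSinhSol]
  ring

theorem hasDerivAt_coshSinhSol {c : ℝ} (hc : c ≠ 0) (t₀ a b t : ℝ) :
    HasDerivAt (coshSinhSol c t₀ a b) (coshSinhSol c t₀ b (c ^ 2 * a) t) t := by
  have hlin : HasDerivAt (fun s => c * (s - t₀)) c t := by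
    simpa using ((hasDerivAt_id t).sub_const t₀).const_mul c
  have hcosh := ((hasDerivAt_cosh _).comp t hlin).const_mul a
  have hsinh := ((hasDerivAt_sinh _).comp t hlin).const_mul (b / c)
  refine (hcosh.add hsinh).congr_deriv ?_
  simp only [coshSinhSol]
  field_simp
  ring

theorem stmt1_general (c t₀ a b : ℝ) (hc : 0 < c)
    (y y' y'' : ℝ → ℝ)
    (hy1 : ∀ t ∈ Ici t₀, HasDerivWithinAt y (y' t) (Ici t₀) t)
    (hy2 : ∀ t ∈ Ici t₀, HasDerivWithinAt y' (y'' t) (Ici t₀) t)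
    (hineq : ∀ t ∈ Ici t₀, c ^ 2 * y t ≤ y'' t)
    (hinit : y t₀ = a)
    (hinit' : b ≤ y' t₀) :
    ∀ t ∈ Ici t₀,
      a * Real.cosh (c * (t - t₀)) + (b / c) * Real.sinh (c * (t - t₀)) ≤ y t := by
  set Y := coshSinhSol c t₀ a b
  set Y' := coshSinhSol c t₀ b (c ^ 2 * a)
  have hY (t : ℝ) : HasDerivAt Y (Y' t) t := hasDerivAt_coshSinhSol hc.ne' t₀ a b t
  have hY' (t : ℝ) : HasDerivAt Y' (c ^ 2 * Y t) t :=
    (hasDerivAt_coshSinhSol hc.ne' t₀ b (c ^ 2 * a) t).congr_deriv (coshSinhSol_sq_mul c t₀ a b t)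
  have hdiff := nonneg_of_sq_mul_le_deriv2_Ici (z := fun t => y t - Y t) (c := c)
    (fun t ht => (hy1 t ht).sub (hY t).hasDerivWithinAt)
    (fun t ht => (hy2 t ht).sub (hY' t).hasDerivWithinAt)
    (fun t ht => by nlinarith [hineq t ht])
    (by simp [Y, coshSinhSol_self, hinit])
    (by simp [Y, Y', coshSinhSol_self, hinit, hinit'])
  exact fun t ht => sub_nonneg.1 (hdiff t ht)

/-- Explicit form of Lemma 3.5: `y(t) ≥ a cosh(c(t-t₀)) + (b/c) sinh(c(t-t₀))`. -/
theorem stmt1 (c t₀ a b : ℝ) (hc : 0 < c) (ha : 0 < a) (hb : 0 < b)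
    (y y' y'' : ℝ → ℝ)
    (hy1 : ∀ t ∈ Ici t₀, HasDerivWithinAt y (y' t) (Ici t₀) t)
    (hy2 : ∀ t ∈ Ici t₀, HasDerivWithinAt y' (y'' t) (Ici t₀) t)
    (hineq : ∀ t ∈ Ici t₀, c ^ 2 * y t ≤ y'' t)
    (hypos : ∀ t ∈ Ici t₀, 0 < y t)
    (hinit : y t₀ = a)
    (hinit' : b ≤ y' t₀) :
    ∀ t ∈ Ici t₀,
      a * Real.cosh (c * (t - t₀)) + (b / c) * Real.sinh (c * (t - t₀)) ≤ y t :=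
  stmt1_general c t₀ a b hc y y' y'' hy1 hy2 hineq hinit hinit'
end

section
/- Let c > 0 and t₀ ∈ ℝ. Let y : ℝ → ℝ be twice differentiable on [t₀, ∞) satisfying y''(t) ≥ c² · y(t) > 0 for all t ≥ t₀, and y'(t₀) > 0. Then y(t) ≥ y(t₀) · cosh(c(t − t₀)) for every t ≥ t₀. -/
/-!
Put `w(t) = y(t) - y(t₀) cosh(c(t - t₀))`, so that `w'' - c² w = y'' - c² y ≥ 0`, `w(t₀) = 0` and
`w'(t₀) = y'(t₀) > 0`. Factor `D² - c² = (D - c)(D + c)`: the first-order inequality `f' ≥ c f`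
makes `f e^{-ct}` nondecreasing, hence preserves nonnegativity from the initial point. Applied to
`u = w' + c w` and then to `w` (with `-c`), it gives `u ≥ 0` and `w ≥ 0`.
-/

open Set Real

theorem nonneg_of_mul_le_hasDerivWithinAt_Ici {f f' : ℝ → ℝ} {a c : ℝ}
    (hf : ∀ t ∈ Ici a, HasDerivWithinAt f (f' t) (Ici a) t)
    (hle : ∀ t ∈ Ici a, c * f t ≤ f' t) (ha : 0 ≤ f a) :
    ∀ t ∈ Ici a, 0 ≤ f t := by
  have hg : ∀ t ∈ Ici a, HasDerivWithinAt (fun s => f s * exp (-c * s))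
      ((f' t - c * f t) * exp (-c * t)) (Ici a) t := fun t ht => by
    have he : HasDerivAt (fun s => exp (-c * s)) (exp (-c * t) * -c) t := by
      simpa using ((hasDerivAt_id' t).const_mul (-c)).exp
    exact ((hf t ht).mul he.hasDerivWithinAt).congr_deriv (by ring)
  have hmono : MonotoneOn (fun s => f s * exp (-c * s)) (Ici a) :=
    monotoneOn_of_hasDerivWithinAt_nonneg (convex_Ici a)
      (fun t ht => (hg t ht).continuousWithinAt)
      (fun t ht => (hg t (interior_subset ht)).mono interior_subset)
      (fun t ht => mul_nonneg (sub_nonneg.mpr (hle t (interior_subset ht))) (exp_pos _).le)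
  intro t ht
  have : 0 ≤ f t * exp (-c * t) :=
    (mul_nonneg ha (exp_pos _).le).trans (hmono self_mem_Ici ht ht)
  exact nonneg_of_mul_nonneg_left this (exp_pos _)

theorem nonneg_of_sq_mul_le_hasDerivWithinAt_Ici {w w' w'' : ℝ → ℝ} {a c : ℝ}
    (hw : ∀ t ∈ Ici a, HasDerivWithinAt w (w' t) (Ici a) t)
    (hw' : ∀ t ∈ Ici a, HasDerivWithinAt w' (w'' t) (Ici a) t)
    (hle : ∀ t ∈ Ici a, c ^ 2 * w t ≤ w'' t) (ha : 0 ≤ w a) (ha' : 0 ≤ w' a + c * w a) :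
    ∀ t ∈ Ici a, 0 ≤ w t := by
  have hu : ∀ t ∈ Ici a, 0 ≤ w' t + c * w t :=
    nonneg_of_mul_le_hasDerivWithinAt_Ici (fun t ht => (hw' t ht).add ((hw t ht).const_mul c))
      (fun t ht => by linarith [hle t ht]) ha'
  exact nonneg_of_mul_le_hasDerivWithinAt_Ici (c := -c) hw (fun t ht => by linarith [hu t ht]) ha

theorem hasDerivAt_cosh_mul_sub (c t₀ t : ℝ) :
    HasDerivAt (fun s => cosh (c * (s - t₀))) (c * sinh (c * (t - t₀))) t := by
  simpa [mul_comm] using (((hasDerivAt_id t).sub_const t₀).const_mul c).cosh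

theorem hasDerivAt_sinh_mul_sub (c t₀ t : ℝ) :
    HasDerivAt (fun s => sinh (c * (s - t₀))) (c * cosh (c * (t - t₀))) t := by
  simpa [mul_comm] using (((hasDerivAt_id t).sub_const t₀).const_mul c).sinh

theorem stmt2_general (c t₀ : ℝ)
    (y y' y'' : ℝ → ℝ)
    (hy1 : ∀ t ∈ Ici t₀, HasDerivWithinAt y (y' t) (Ici t₀) t)
    (hy2 : ∀ t ∈ Ici t₀, HasDerivWithinAt y' (y'' t) (Ici t₀) t)
    (hineq : ∀ t ∈ Ici t₀, c ^ 2 * y t ≤ y'' t)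
    (hinit' : 0 < y' t₀) :
    ∀ t ∈ Ici t₀, y t₀ * Real.cosh (c * (t - t₀)) ≤ y t := by
  have hw := nonneg_of_sq_mul_le_hasDerivWithinAt_Ici
    (w := fun t => y t - y t₀ * cosh (c * (t - t₀)))
    (w' := fun t => y' t - y t₀ * (c * sinh (c * (t - t₀))))
    (w'' := fun t => y'' t - y t₀ * (c * (c * cosh (c * (t - t₀)))))
    (fun t ht => (hy1 t ht).sub ((hasDerivAt_cosh_mul_sub c t₀ t).const_mul _).hasDerivWithinAt)
    (fun t ht => (hy2 t ht).sub
      (((hasDerivAt_sinh_mul_sub c t₀ t).const_mul c).const_mul _).hasDerivWithinAt)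
    (fun t ht => by linarith [hineq t ht])
    (by simp) (by simpa using hinit'.le)
  exact fun t ht => sub_nonneg.mp (hw t ht)

/-- Corollary 3.6: if `y'' ≥ c² y > 0` on `[t₀, ∞)` and `y'(t₀) > 0`,
then `y(t) ≥ y(t₀) cosh(c(t - t₀))` for all `t ≥ t₀`. -/
theorem stmt2 (c t₀ : ℝ) (hc : 0 < c)
    (y y' y'' : ℝ → ℝ)
    (hy1 : ∀ t ∈ Ici t₀, HasDerivWithinAt y (y' t) (Ici t₀) t)
    (hy2 : ∀ t ∈ Ici t₀, HasDerivWithinAt y' (y'' t) (Ici t₀) t)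
    (hineq : ∀ t ∈ Ici t₀, c ^ 2 * y t ≤ y'' t)
    (hypos : ∀ t ∈ Ici t₀, 0 < y t)
    (hinit' : 0 < y' t₀) :
    ∀ t ∈ Ici t₀, y t₀ * Real.cosh (c * (t - t₀)) ≤ y t :=
  stmt2_general c t₀ y y' y'' hy1 hy2 hineq hinit'
end

section
/- Let X be a metric space, K ⊆ X a compact set, and M ≥ 0. Let xₖ : [0, 1] → X be a sequence of curves, each Lipschitz with constant M and with image contained in K. Then there exist a strictly increasing sequence of indices (k_j) and a curve x : [0, 1] → X, Lipschitz with constant M, such that x_{k_j} converges uniformly to x on [0, 1] and length(x) ≤ liminf_{j → ∞} length(x_{k_j}), where length denotes the total variation of the curve over [0, 1]. -/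
open Filter Set
open scoped ENNReal

/-- Metric-space form of Theorem 2.5 (Busemann): a sequence of `M`-Lipschitz curves
with images in a compact set has a uniformly convergent subsequence whose limit is
`M`-Lipschitz and whose length (total variation) is at most the lower limit of the
lengths. -/
theorem stmt12 {X : Type*} [MetricSpace X]
    (K : Set X) (hK : IsCompact K) (M : NNReal)
    (x : ℕ → ℝ → X)
    (hlip : ∀ k, LipschitzOnWith M (x k) (Icc (0:ℝ) 1))
    (himg : ∀ k, ∀ t ∈ Icc (0:ℝ) 1, x k t ∈ K) :
    ∃ φ : ℕ → ℕ, StrictMono φ ∧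
      ∃ y : ℝ → X, LipschitzOnWith M y (Icc (0:ℝ) 1) ∧
        TendstoUniformlyOn (fun j => x (φ j)) y atTop (Icc (0:ℝ) 1) ∧
        eVariationOn y (Icc (0:ℝ) 1) ≤
          liminf (fun j => eVariationOn (x (φ j)) (Icc (0:ℝ) 1)) atTop := by
  set s : Set ℝ := Icc (0:ℝ) 1 with hs
  -- restrict to bounded continuous functions on the compact subtype
  have hlipR : ∀ k, LipschitzWith M (s.restrict (x k)) :=
    fun k => (hlip k).to_restrict
  let f : ℕ → BoundedContinuousFunction s X := fun k =>
    BoundedContinuousFunction.mkOfCompact ⟨s.restrict (x k), (hlipR k).continuous⟩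
  let A : Set (BoundedContinuousFunction s X) := Set.range f
  have in_s : ∀ (u : BoundedContinuousFunction s X) (t : s), u ∈ A → u t ∈ K := by
    rintro u t ⟨k, rfl⟩
    exact himg k t t.2
  have equi : Equicontinuous ((↑) : A → s → X) := by
    have hl : ∀ u : A, LipschitzWith M (u : s → X) := by
      rintro ⟨u, k, rfl⟩
      exact hlipR k
    refine Metric.equicontinuous_of_continuity_modulus (fun t => (M : ℝ) * t) ?_ _ ?_
    · have : Tendsto (fun t : ℝ => (M : ℝ) * t) (nhds 0) (nhds ((M : ℝ) * 0)) :=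
        (tendsto_const_nhds.mul tendsto_id)
      simpa using this
    · intro a b u
      exact (hl u).dist_le_mul a b
  have hAcomp : IsCompact (closure A) :=
    BoundedContinuousFunction.arzela_ascoli K hK A in_s equi
  obtain ⟨g, -, φ, hφ, hconv⟩ :=
    hAcomp.tendsto_subseq (x := f) (fun k => subset_closure ⟨k, rfl⟩)
  -- the limit curve
  have h0 : (0:ℝ) ∈ s := ⟨le_refl _, zero_le_one⟩
  let y : ℝ → X := fun t => if h : t ∈ s then g ⟨t, h⟩ else g ⟨0, h0⟩
  have hyc : ∀ t : s, y t = g t := fun t => by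
    simp only [y, dif_pos t.2]
  -- uniform convergence
  have huc : TendstoUniformlyOn (fun j => x (φ j)) y atTop s := by
    rw [tendstoUniformlyOn_iff_tendstoUniformly_comp_coe]
    have hg : TendstoUniformly (fun j => (f (φ j) : s → X)) (g : s → X) atTop := by
      rw [← BoundedContinuousFunction.tendsto_iff_tendstoUniformly]
      exact hconv
    have : (fun j (t : s) => x (φ j) t) = fun j => (f (φ j) : s → X) := rfl
    rw [this]
    convert hg using 1
    funext t
    exact hyc t
  -- pointwise convergence on s
  have hpt : ∀ t ∈ s, Tendsto (fun j => x (φ j) t) atTop (nhds (y t)) :=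
    fun t ht => huc.tendsto_at ht
  refine ⟨φ, hφ, y, ?_, huc, ?_⟩
  · -- Lipschitz of the limit
    intro a ha b hb
    have h1 : Tendsto (fun j => edist (x (φ j) a) (x (φ j) b)) atTop
        (nhds (edist (y a) (y b))) := (hpt a ha).edist (hpt b hb)
    refine le_of_tendsto h1 (Eventually.of_forall fun j => ?_)
    exact hlip (φ j) ha hb
  · -- lower semicontinuity of variation
    refine le_of_forall_lt_imp_le_of_dense fun v hv => ?_
    have := eVariationOn.lowerSemicontinuous_aux (F := fun j => x (φ j))
      (p := atTop) (f := y) (s := s) hpt hv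
    exact le_liminf_of_le (by isBoundedDefault)
      (this.mono fun j h => h.le)
end
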